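/- The function Δ : (0,∞) → ℝ is strictly increasing, i.e., for all real numbers 0 < s < t one has Δ(s) < Δ(t). -/

import Mathlib

noncomputable section

/-- The hyperbolic Kepler function `f_{g,L}(S) = S - g·arcsinh(S) - L`. -/
def fhk (g L : ℝ) : ℝ → ℝ := fun S => S - g * Real.arsinh S - L

/-- `β(f,z) = |f(z)/f'(z)|`. -/
def betaFn (f : ℝ → ℝ) (z : ℝ) : ℝ := |f z / deriv f z|

/-- `γ(f,z) = sup_{k ≥ 2} |f^{(k)}(z)/(k!·f'(z))|^{1/(k-1)}`. -/
def gammaFn (f : ℝ → ℝ) (z : ℝ) : ℝ :=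
  sSup {y : ℝ | ∃ k : ℕ, 2 ≤ k ∧
    y = |iteratedDeriv k f z / (Nat.factorial k * deriv f z)| ^ ((1 : ℝ) / ((k : ℝ) - 1))}

/-- `α(f,z) = β(f,z)·γ(f,z)`. -/
def alphaFn (f : ℝ → ℝ) (z : ℝ) : ℝ := betaFn f z * gammaFn f z

/-- Smale's constant (improved by Wang–Han): `α₀ = 3 - 2√2`. -/
def alpha0 : ℝ := 3 - 2 * Real.sqrt 2

/-- `z` is an approximate zero of `f` when `α(f,z) < α₀`. -/
def ApproxZero (f : ℝ → ℝ) (z : ℝ) : Prop := alphaFn f z < alpha0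

/-- The half-width `Δ(S₀)` of the stripe `R₃(S₀)` of Theorem 3.1. -/
def Delta (S₀ : ℝ) : ℝ :=
  if S₀ ≤ Real.sqrt 7 / 3 then
    Real.sqrt 3 * alpha0 * S₀ ^ 3 * Real.sqrt (1 + S₀ ^ 2) /
      (2 * (Real.sqrt (1 + S₀ ^ 2) + 1) ^ ((3 : ℝ) / 2))
  else
    alpha0 * S₀ * min 1 S₀ * Real.sqrt (1 + S₀ ^ 2) /
      (2 * (Real.sqrt (1 + S₀ ^ 2) + 1))

/-!
Write `u = √(1 + S²)`, so that `S² = (u - 1)(u + 1)`. On the first branch this identity turns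
`S³ / (u + 1)^{3/2}` into `(u - 1)^{3/2}`, so that branch equals `(√3 α₀ / 2)(u - 1)^{3/2} u`;
the second branch equals `(α₀ / 2) · S min(1, S) · u / (u + 1)`. Both are products of positive
increasing factors of `S`, and the two branches agree at `S = √7/3` (where `u = 4/3`), so `Δ` is
strictly increasing on `(0, √7/3]` and on `[√7/3, ∞)`, hence on `(0, ∞)`.
-/

open Real Set

lemma alpha0_pos : 0 < alpha0 := by
  have : √2 < 3 / 2 := by rw [sqrt_lt' (by norm_num)]; norm_num
  unfold alpha0; linarith

lemma one_le_sqrt_one_add_sq (S : ℝ) : 1 ≤ √(1 + S ^ 2) :=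
  one_le_sqrt.2 (by nlinarith [sq_nonneg S])

lemma sq_eq_sqrt_one_add_sq_sub_one_mul (S : ℝ) :
    S ^ 2 = (√(1 + S ^ 2) - 1) * (√(1 + S ^ 2) + 1) := by
  have := sq_sqrt (show 0 ≤ 1 + S ^ 2 by positivity)
  linear_combination -this

lemma sqrt_one_add_sq_strictMonoOn : StrictMonoOn (fun S : ℝ ↦ √(1 + S ^ 2)) (Ici 0) :=
  fun _ hs _ _ hst ↦ sqrt_lt_sqrt (by positivity) (by nlinarith [mem_Ici.1 hs])

lemma div_add_one_strictMonoOn : StrictMonoOn (fun x : ℝ ↦ x / (x + 1)) (Ici 0) := by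
  intro x hx y hy hxy
  rw [mem_Ici] at hx hy
  rw [div_lt_div_iff₀ (by linarith) (by linarith)]
  linarith

lemma mul_min_one_strictMonoOn : StrictMonoOn (fun S : ℝ ↦ S * min 1 S) (Ioi 0) :=
  fun _ hs _ ht hst ↦ mul_lt_mul_of_lt_of_le_of_nonneg_of_pos hst
    (min_le_min_left 1 hst.le) (le_of_lt hs) (lt_min one_pos ht)

def deltaLow (S : ℝ) : ℝ :=
  √3 * alpha0 * S ^ 3 * √(1 + S ^ 2) / (2 * (√(1 + S ^ 2) + 1) ^ ((3 : ℝ) / 2))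

def deltaHigh (S : ℝ) : ℝ :=
  alpha0 * S * min 1 S * √(1 + S ^ 2) / (2 * (√(1 + S ^ 2) + 1))

lemma deltaLow_eq {S : ℝ} (hS : 0 ≤ S) :
    deltaLow S = √3 * alpha0 / 2 * ((√(1 + S ^ 2) - 1) ^ ((3 : ℝ) / 2) * √(1 + S ^ 2)) := by
  have hu := one_le_sqrt_one_add_sq S
  have hcube :
      S ^ 3 = (√(1 + S ^ 2) - 1) ^ ((3 : ℝ) / 2) * (√(1 + S ^ 2) + 1) ^ ((3 : ℝ) / 2) := by
    rw [← mul_rpow (by linarith) (by linarith), ← sq_eq_sqrt_one_add_sq_sub_one_mul,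
      ← rpow_natCast S 2, ← rpow_mul hS]
    norm_num
  have hpos : 0 < (√(1 + S ^ 2) + 1) ^ ((3 : ℝ) / 2) := by positivity
  rw [deltaLow, hcube]
  field_simp

lemma deltaLow_strictMonoOn : StrictMonoOn deltaLow (Ici 0) := by
  intro s hs t ht hst
  have hu := sqrt_one_add_sq_strictMonoOn hs ht hst
  have hs1 := one_le_sqrt_one_add_sq s
  rw [deltaLow_eq hs, deltaLow_eq ht]
  have hK : 0 < √3 * alpha0 / 2 := by have := alpha0_pos; positivity
  refine mul_lt_mul_of_pos_left (mul_lt_mul'' ?_ hu (by positivity) (by linarith)) hK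
  exact rpow_lt_rpow (by linarith) (by linarith) (by norm_num)

lemma deltaHigh_eq (S : ℝ) :
    deltaHigh S = alpha0 / 2 * (S * min 1 S * (√(1 + S ^ 2) / (√(1 + S ^ 2) + 1))) := by
  have := one_le_sqrt_one_add_sq S
  rw [deltaHigh]
  field_simp

lemma deltaHigh_strictMonoOn : StrictMonoOn deltaHigh (Ioi 0) := by
  intro s hs t ht hst
  have hs' : 0 ≤ s := le_of_lt hs
  have hu := div_add_one_strictMonoOn (mem_Ici.2 (sqrt_nonneg (1 + s ^ 2)))
    (mem_Ici.2 (sqrt_nonneg (1 + t ^ 2)))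
    (sqrt_one_add_sq_strictMonoOn (mem_Ici.2 hs') (mem_Ici.2 (le_of_lt ht)) hst)
  have hm := mul_min_one_strictMonoOn hs ht hst
  have hs1 := one_le_sqrt_one_add_sq s
  rw [deltaHigh_eq, deltaHigh_eq]
  have hK : 0 < alpha0 / 2 := by have := alpha0_pos; positivity
  refine mul_lt_mul_of_pos_left (mul_lt_mul'' hm hu ?_ (by positivity)) hK
  exact mul_nonneg hs' (le_min zero_le_one hs')

lemma deltaLow_sqrt_seven_div_three : deltaLow (√7 / 3) = deltaHigh (√7 / 3) := by
  have hu : √(1 + (√7 / 3) ^ 2) = 4 / 3 := by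
    rw [div_pow, sq_sqrt (by norm_num), sqrt_eq_iff_eq_sq (by norm_num) (by norm_num)]; norm_num
  have h3 : √3 * (1 / 3 : ℝ) ^ ((3 : ℝ) / 2) = 1 / 3 := by
    rw [sqrt_eq_rpow, one_div (3 : ℝ), inv_rpow (by norm_num), ← div_eq_mul_inv,
      ← rpow_sub (by norm_num)]
    norm_num
  have h7 : √7 / 3 ≤ 1 := by
    rw [div_le_one (by norm_num), sqrt_le_left (by norm_num)]; norm_num
  rw [deltaLow_eq (by positivity), deltaHigh_eq, hu, min_eq_right h7, ← sq,
    div_pow, sq_sqrt (by norm_num)]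
  norm_num
  linear_combination (2 / 3 * alpha0) * h3

lemma Delta_eqOn_deltaLow : EqOn Delta deltaLow (Iic (√7 / 3)) :=
  fun _ hS ↦ if_pos hS

lemma Delta_eqOn_deltaHigh : EqOn Delta deltaHigh (Ici (√7 / 3)) := by
  intro S hS
  rcases (mem_Ici.1 hS).eq_or_lt with rfl | h
  · exact (if_pos le_rfl).trans deltaLow_sqrt_seven_div_three
  · exact if_neg h.not_ge

lemma Delta_strictMonoOn : StrictMonoOn Delta (Ioi 0) := by
  have hc : (0 : ℝ) < √7 / 3 := by positivity
  rw [← Ioc_union_Ici_eq_Ioi hc]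
  refine StrictMonoOn.union ?_ ?_ (isGreatest_Ioc hc) isLeast_Ici
  · exact (deltaLow_strictMonoOn.mono fun _ h ↦ le_of_lt h.1).congr
      (Delta_eqOn_deltaLow.mono Ioc_subset_Iic_self).symm
  · exact (deltaHigh_strictMonoOn.mono (Ici_subset_Ioi.2 hc)).congr Delta_eqOn_deltaHigh.symm

/-- Lemma 3.3: the function `Δ` is strictly increasing on `(0,∞)`. -/
theorem Delta_strictMono (s t : ℝ) (hs : 0 < s) (hst : s < t) : Delta s < Delta t :=
  Delta_strictMonoOn hs (hs.trans hst) hst
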